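/- arXiv:2112.08856 — 2 statements merged into one kernel-verified Lean document; each statement's English description precedes it below -/
import Mathlib

section
/- Let Ω ⊂ ℝ^N be a bounded measurable set of positive measure with diameter d_Ω, and let s ∈ [0,1). Then for every u ∈ L²(Ω) with ∫_Ω u dx = 0, one has ∫_Ω u² dx ≤ C_Ω · (1/2) ∫_Ω ∫_Ω (u(x)-u(y))²/|x-y|^{N+2s} dx dy, where C_Ω = 2 max{d_Ω^N, d_Ω^{N+2}} / |Ω|. -/
/-!
Expanding the square and using `∫_Ω u = 0` gives `∫_Ω ∫_Ω (u x - u y)² = 2 |Ω| ∫_Ω u²`.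
On the other hand, for `x, y ∈ Ω` we have `|x - y|^(N+2s) ≤ d_Ω^(N+2s) ≤ max {d_Ω^N, d_Ω^(N+2)}`,
so `(u x - u y)²` is bounded pointwise by that maximum times the Gagliardo kernel
`(u x - u y)² / |x - y|^(N+2s)`. Integrating over `Ω × Ω` and dividing by `2 |Ω|` gives the
claim.
-/

open Real MeasureTheory Metric Set
open scoped ENNReal

/-- The regional Gagliardo-type energy `(1/2)∫_Ω∫_Ω (u x - u y)²/|x-y|^(N+2s) dx dy`
as an extended-real quantity. -/
noncomputable def regEnergy {N : ℕ} (s : ℝ) (Ω : Set (EuclideanSpace ℝ (Fin N)))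
    (u : EuclideanSpace ℝ (Fin N) → ℝ) : ℝ≥0∞ :=
  (1 / 2 : ℝ≥0∞) * ∫⁻ x in Ω, ∫⁻ y in Ω,
    ENNReal.ofReal ((u x - u y) ^ 2 * dist x y ^ (-(N : ℝ) - 2 * s))

theorem Real.rpow_le_max_rpow {d a b c : ℝ} (hd : 0 ≤ d) (ha : 0 ≤ a) (hab : a ≤ b)
    (hbc : b ≤ c) : d ^ b ≤ max (d ^ a) (d ^ c) := by
  rcases le_total d 1 with hd1 | hd1
  · exact le_max_of_le_left (rpow_le_rpow_of_exponent_ge' hd hd1 ha hab)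
  · exact le_max_of_le_right (rpow_le_rpow_of_exponent_le hd1 hbc)

theorem sq_sub_le_mul_sq_sub_mul_dist_rpow_neg {X : Type*} [MetricSpace X] (u : X → ℝ)
    {x y : X} {q M : ℝ} (hM : dist x y ^ q ≤ M) :
    (u x - u y) ^ 2 ≤ M * ((u x - u y) ^ 2 * dist x y ^ (-q)) := by
  rcases eq_or_ne x y with rfl | hxy
  · simp
  have hpos : 0 < dist x y := dist_pos.mpr hxy
  calc (u x - u y) ^ 2 = ((u x - u y) ^ 2 * dist x y ^ (-q)) * dist x y ^ q := by
        rw [mul_assoc, ← rpow_add hpos, neg_add_cancel, rpow_zero, mul_one]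
    _ ≤ ((u x - u y) ^ 2 * dist x y ^ (-q)) * M := by gcongr
    _ = M * ((u x - u y) ^ 2 * dist x y ^ (-q)) := mul_comm _ _

theorem dist_rpow_le_max_diam_pow {X : Type*} [PseudoMetricSpace X] {Ω : Set X}
    (hΩ : Bornology.IsBounded Ω) {x y : X} (hx : x ∈ Ω) (hy : y ∈ Ω) (N : ℕ) {s : ℝ}
    (hs0 : 0 ≤ s) (hs1 : s ≤ 1) :
    dist x y ^ ((N : ℝ) + 2 * s) ≤ max (diam Ω ^ N) (diam Ω ^ (N + 2)) := by
  have hdiam : diam Ω ^ ((N : ℝ) + 2 * s) ≤ max (diam Ω ^ (N : ℝ)) (diam Ω ^ ((N : ℝ) + 2)) :=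
    rpow_le_max_rpow diam_nonneg N.cast_nonneg (by linarith) (by linarith)
  norm_cast at hdiam
  exact (rpow_le_rpow dist_nonneg (dist_le_diam_of_mem hΩ hx hy) (by positivity)).trans hdiam

section MeanZero

variable {α : Type*} [MeasurableSpace α] {μ : Measure α} [IsFiniteMeasure μ] {u : α → ℝ}

theorem integral_sq_sub_of_integral_eq_zero (hu : MemLp u 2 μ) (hmean : ∫ y, u y ∂μ = 0)
    (x : α) : ∫ y, (u x - u y) ^ 2 ∂μ = μ.real univ * u x ^ 2 + ∫ y, u y ^ 2 ∂μ := by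
  have hexpand : ∀ y, (u x - u y) ^ 2 = (u x ^ 2 - 2 * u x * u y) + u y ^ 2 := fun y => by ring
  have hlin : Integrable (fun y => 2 * u x * u y) μ := (hu.integrable one_le_two).const_mul _
  have hquad : Integrable (fun y => u x ^ 2 - 2 * u x * u y) μ := (integrable_const _).sub hlin
  simp_rw [hexpand]
  rw [integral_add hquad hu.integrable_sq,
    integral_sub (integrable_const _) hlin, integral_const, integral_const_mul,
    hmean, smul_eq_mul, mul_zero, sub_zero]

theorem lintegral_lintegral_ofReal_sq_sub_eq (hu : MemLp u 2 μ) (hmean : ∫ y, u y ∂μ = 0) :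
    ∫⁻ x, ∫⁻ y, ENNReal.ofReal ((u x - u y) ^ 2) ∂μ ∂μ
      = ENNReal.ofReal (2 * μ.real univ * ∫ x, u x ^ 2 ∂μ) := by
  have hu2 : Integrable (fun x => u x ^ 2) μ := hu.integrable_sq
  have hinner : ∀ x, ∫⁻ y, ENNReal.ofReal ((u x - u y) ^ 2) ∂μ
      = ENNReal.ofReal (μ.real univ * u x ^ 2 + ∫ y, u y ^ 2 ∂μ) := fun x => by
    rw [← integral_sq_sub_of_integral_eq_zero hu hmean x,
      ofReal_integral_eq_lintegral_ofReal]
    · exact ((memLp_const (u x)).sub hu).integrable_sq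
    · exact ae_of_all _ fun y => sq_nonneg _
  have hint : Integrable (fun x => μ.real univ * u x ^ 2 + ∫ y, u y ^ 2 ∂μ) μ :=
    (hu2.const_mul _).add (integrable_const _)
  rw [lintegral_congr hinner, ← ofReal_integral_eq_lintegral_ofReal hint
    (ae_of_all _ fun x => by positivity), integral_add (hu2.const_mul _) (integrable_const _),
    integral_const_mul, integral_const, smul_eq_mul]
  ring_nf

end MeanZero

theorem setLIntegral_setLIntegral_ofReal_sq_sub_le {X : Type*} [MetricSpace X]
    [MeasurableSpace X] {μ : Measure X} {Ω : Set X} (hΩ : MeasurableSet Ω) (u : X → ℝ)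
    {q M : ℝ} (hM₀ : 0 ≤ M) (hM : ∀ x ∈ Ω, ∀ y ∈ Ω, dist x y ^ q ≤ M) :
    ∫⁻ x in Ω, ∫⁻ y in Ω, ENNReal.ofReal ((u x - u y) ^ 2) ∂μ ∂μ
      ≤ ENNReal.ofReal M *
        ∫⁻ x in Ω, ∫⁻ y in Ω, ENNReal.ofReal ((u x - u y) ^ 2 * dist x y ^ (-q)) ∂μ ∂μ := by
  rw [← lintegral_const_mul' _ _ ENNReal.ofReal_ne_top]
  refine setLIntegral_mono' hΩ fun x hx => ?_
  rw [← lintegral_const_mul' _ _ ENNReal.ofReal_ne_top]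
  refine setLIntegral_mono' hΩ fun y hy => ?_
  rw [← ENNReal.ofReal_mul hM₀]
  exact ENNReal.ofReal_le_ofReal (sq_sub_le_mul_sq_sub_mul_dist_rpow_neg u (hM x hx y hy))

theorem ENNReal.ofReal_le_div_mul_half_of_two_mul_le {V I M : ℝ} {E : ℝ≥0∞} (hV : 0 < V)
    (h : ENNReal.ofReal (2 * V * I) ≤ ENNReal.ofReal M * E) :
    ENNReal.ofReal I ≤ ENNReal.ofReal (M / V) * (1 / 2 * E) := by
  have hhalf : (1 / 2 : ℝ≥0∞) = ENNReal.ofReal (1 / 2) := by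
    rw [ENNReal.ofReal_div_of_pos two_pos]; simp
  calc ENNReal.ofReal I = ENNReal.ofReal (1 / (2 * V)) * ENNReal.ofReal (2 * V * I) := by
        rw [← ENNReal.ofReal_mul (by positivity)]
        congr 1
        field_simp
    _ ≤ ENNReal.ofReal (1 / (2 * V)) * (ENNReal.ofReal M * E) := by gcongr
    _ = ENNReal.ofReal (1 / 2 * (M / V)) * E := by
        rw [← mul_assoc, ← ENNReal.ofReal_mul (by positivity)]
        congr 2
        field_simp
    _ = ENNReal.ofReal (M / V) * (1 / 2 * E) := by
        rw [ENNReal.ofReal_mul (by norm_num), ← hhalf]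
        ring

/-- Uniform Poincaré inequality: if `Ω ⊆ ℝ^N` is bounded measurable of positive measure
with diameter `d_Ω`, `s ∈ [0,1)`, and `u ∈ L²(Ω)` has zero average, then
`∫_Ω u² ≤ C_Ω E_s(u,u)` with `C_Ω = 2 max{d_Ω^N, d_Ω^(N+2)}/|Ω|`. -/
theorem stmt_4 {N : ℕ} (Ω : Set (EuclideanSpace ℝ (Fin N)))
    (hΩmeas : MeasurableSet Ω) (hΩbd : Bornology.IsBounded Ω)
    (hΩpos : 0 < volume Ω) (s : ℝ) (hs0 : 0 ≤ s) (hs1 : s < 1)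
    (u : EuclideanSpace ℝ (Fin N) → ℝ) (hu : MemLp u 2 (volume.restrict Ω))
    (hmean : ∫ x in Ω, u x = 0) :
    ENNReal.ofReal (∫ x in Ω, (u x) ^ 2)
      ≤ ENNReal.ofReal
          (2 * max (Metric.diam Ω ^ N) (Metric.diam Ω ^ (N + 2)) / (volume Ω).toReal) *
        regEnergy s Ω u := by
  set M := max (Metric.diam Ω ^ N) (Metric.diam Ω ^ (N + 2))
  have hΩfin : volume Ω ≠ ∞ := hΩbd.measure_lt_top.ne
  have : IsFiniteMeasure (volume.restrict Ω) := isFiniteMeasure_restrict.mpr hΩfin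
  have hV : 0 < volume.real Ω := ENNReal.toReal_pos hΩpos.ne' hΩfin
  have hM₀ : 0 ≤ M := le_max_of_le_left (pow_nonneg diam_nonneg N)
  have henergy := setLIntegral_setLIntegral_ofReal_sq_sub_le (μ := volume) hΩmeas u hM₀
    fun x hx y hy => dist_rpow_le_max_diam_pow hΩbd hx hy N hs0 hs1.le
  rw [lintegral_lintegral_ofReal_sq_sub_eq hu hmean, measureReal_restrict_apply_univ,
    neg_add'] at henergy
  calc ENNReal.ofReal (∫ x in Ω, u x ^ 2)
      ≤ ENNReal.ofReal (M / volume.real Ω) * regEnergy s Ω u :=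
        ENNReal.ofReal_le_div_mul_half_of_two_mul_le hV henergy
    _ ≤ _ := by
        rw [← measureReal_def]
        gcongr
        linarith
end

section
/- Let Ω ⊂ ℝ^N be a bounded open set satisfying the uniform cone property: there exist δ₀ ∈ (0,1), α ∈ (0,π/2] such that for every x in the closure of Ω there is a rotation R_x ∈ O(N) with x + R_x(C_{α,δ₀}) ⊂ Ω, where C_{α,δ₀} = {z : 0 < |z| ≤ δ₀, (z/|z|)·e_N < α}. Then there is a constant C₀ > 0 (depending only on N and α) such that for all δ ∈ (0,δ₀), all x in the closure of Ω, and all s ∈ [0,1): ∫_{Ω \ B_δ(x)} |x-y|^{-N-2s} dy ≥ C₀ log(δ₀/δ). -/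
/-!
Translate the cone at `x` to the origin. On the truncated cone `δ < |z| ≤ δ₀` we have `|z| < 1`,
so the kernel `|z|^(-N-2s)` dominates `|z|^(-N)`, and the latter is scale invariant: since the
truncated cones are dilates of each other, the layer `a < |z| ≤ 2a` has measure
`(2^N - 1) a^N |C₁|` and contributes at least `(1 - 2^(-N)) |C₁| ≥ |C₁|/2`, where `C₁` is the cone
truncated at radius `1`. Splitting `(δ, δ₀]` into dyadic layers gives `|C₁|/2 · log (δ₀/δ)`.
-/

open Real MeasureTheory Metric Set

/-- The cone segment `{z : 0 < |z| ≤ r, (z/|z|)·e_N < α}` in `ℝ^N`. -/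
def coneSegment (N : ℕ) (α r : ℝ) : Set (EuclideanSpace ℝ (Fin N)) :=
  {z | 0 < ‖z‖ ∧ ‖z‖ ≤ r ∧ ∀ i : Fin N, (i : ℕ) = N - 1 → z i < α * ‖z‖}

/-- `Ω` has the uniform cone property with aperture `α` and height `δ₀`. -/
def UniformConeProperty {N : ℕ} (Ω : Set (EuclideanSpace ℝ (Fin N))) (α δ₀ : ℝ) : Prop :=
  ∀ x ∈ closure Ω, ∃ e : EuclideanSpace ℝ (Fin N) ≃ₗᵢ[ℝ] EuclideanSpace ℝ (Fin N),
    (fun z => x + e z) '' coneSegment N α δ₀ ⊆ Ω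

open Pointwise Module

lemma integrableOn_dist_rpow_of_le_dist {X : Type*} [PseudoMetricSpace X] [MeasurableSpace X]
    [OpensMeasurableSpace X] {μ : Measure X} {s : Set X} (hs : MeasurableSet s) (hμs : μ s ≠ ⊤)
    {x : X} {δ p : ℝ} (hδ : 0 < δ) (hp : p ≤ 0) (h : ∀ y ∈ s, δ ≤ dist x y) :
    IntegrableOn (fun y => dist x y ^ p) s μ := by
  refine Measure.integrableOn_of_bounded (M := δ ^ p) hμs
    (by fun_prop : Measurable fun y => dist x y ^ p).aestronglyMeasurable
    (ae_restrict_of_forall_mem hs fun y hy => ?_)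
  rw [norm_of_nonneg (rpow_nonneg dist_nonneg _)]
  exact rpow_le_rpow_of_nonpos hδ (h y hy) hp

lemma log_div_le_two_mul_one_sub_div_pow {a b : ℝ} (ha : 0 < a) (hab : a ≤ b) (hb : b ≤ 2 * a)
    {d : ℕ} (hd : d ≠ 0) : log (b / a) ≤ 2 * (1 - (a / b) ^ d) := by
  have hb0 : 0 < b := ha.trans_le hab
  have hlog : log (b / a) ≤ b / a - 1 := log_le_sub_one_of_pos (by positivity)
  have hratio : b / a - 1 ≤ 2 * (1 - a / b) := by
    rw [div_sub_one ha.ne', one_sub_div hb0.ne', mul_div_assoc', div_le_div_iff₀ ha hb0]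
    nlinarith
  have hpow : (a / b) ^ d ≤ a / b :=
    pow_le_of_le_one (by positivity) ((div_le_one hb0).2 hab) hd
  linarith

section Cone

variable {E : Type*} [NormedAddCommGroup E] {V : Set E}

def coneShell (V : Set E) (a b : ℝ) : Set E := {z ∈ V | a < ‖z‖ ∧ ‖z‖ ≤ b}

lemma coneShell_eq_diff (V : Set E) (a b : ℝ) :
    coneShell V a b = (V ∩ closedBall 0 b) \ (V ∩ closedBall 0 a) := by
  ext z
  simp only [coneShell, mem_ofPred_eq, mem_sdiff, mem_inter_iff, mem_closedBall_zero_iff, not_and,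
    not_le]
  tauto

lemma coneShell_union {a b c : ℝ} (hab : a ≤ b) (hbc : b ≤ c) :
    coneShell V a b ∪ coneShell V b c = coneShell V a c := by
  ext z
  simp only [coneShell, mem_union, mem_ofPred_eq]
  constructor
  · rintro (⟨hz, h1, h2⟩ | ⟨hz, h1, h2⟩) <;> exact ⟨hz, by linarith, by linarith⟩
  · rintro ⟨hz, h1, h2⟩
    rcases le_or_gt ‖z‖ b with h | h
    exacts [Or.inl ⟨hz, h1, h⟩, Or.inr ⟨hz, h, h2⟩]

lemma disjoint_coneShell (a b c : ℝ) : Disjoint (coneShell V a b) (coneShell V b c) :=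
  disjoint_left.2 fun _ h₁ h₂ => (h₂.2.1.trans_le h₁.2.2).false

lemma measurableSet_coneShell [MeasurableSpace E] [OpensMeasurableSpace E] (hV : MeasurableSet V)
    (a b : ℝ) : MeasurableSet (coneShell V a b) := by
  rw [coneShell_eq_diff]
  exact (hV.inter measurableSet_closedBall).diff (hV.inter measurableSet_closedBall)

variable [NormedSpace ℝ E]

lemma smul_inter_closedBall (hV : ∀ c : ℝ, 0 < c → ∀ z ∈ V, c • z ∈ V) {c r : ℝ} (hc : 0 < c)
    (hr : 0 ≤ r) : c • (V ∩ closedBall 0 r) = V ∩ closedBall 0 (c * r) := by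
  have hcV : c • V = V := by
    refine (smul_set_subset_iff.2 fun z hz => hV c hc z hz).antisymm fun z hz => ?_
    rw [mem_smul_set_iff_inv_smul_mem₀ hc.ne']
    exact hV _ (inv_pos.2 hc) z hz
  rw [smul_set_inter₀ hc.ne', hcV, smul_closedBall _ _ hr, smul_zero, norm_of_nonneg hc.le]

variable [MeasurableSpace E] [FiniteDimensional ℝ E] (μ : Measure E) [μ.IsAddHaarMeasure]

lemma measure_coneShell_lt_top (a b : ℝ) : μ (coneShell V a b) < ⊤ :=
  (measure_mono fun _ hz => mem_closedBall_zero_iff.2 hz.2.2).trans_lt measure_closedBall_lt_top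

variable [BorelSpace E]

lemma measureReal_inter_closedBall (hV : ∀ c : ℝ, 0 < c → ∀ z ∈ V, c • z ∈ V) {r : ℝ}
    (hr : 0 < r) :
    μ.real (V ∩ closedBall 0 r) = r ^ finrank ℝ E * μ.real (V ∩ closedBall 0 1) := by
  have h := smul_inter_closedBall hV hr zero_le_one
  rw [mul_one] at h
  rw [← h, measureReal_def, Measure.addHaar_smul, abs_of_pos (pow_pos hr _), ENNReal.toReal_mul,
    ENNReal.toReal_ofReal (pow_pos hr _).le, measureReal_def]

lemma measureReal_coneShell (hV : ∀ c : ℝ, 0 < c → ∀ z ∈ V, c • z ∈ V) (hVm : MeasurableSet V)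
    {a b : ℝ} (ha : 0 < a) (hab : a ≤ b) :
    μ.real (coneShell V a b)
      = (b ^ finrank ℝ E - a ^ finrank ℝ E) * μ.real (V ∩ closedBall 0 1) := by
  rw [coneShell_eq_diff,
    measureReal_sdiff (inter_subset_inter_right _ (closedBall_subset_closedBall hab))
      (hVm.inter measurableSet_closedBall)
      ((measure_mono inter_subset_right).trans_lt measure_closedBall_lt_top).ne,
    measureReal_inter_closedBall μ hV (ha.trans_le hab), measureReal_inter_closedBall μ hV ha]
  ring

lemma integrableOn_norm_rpow_coneShell (hVm : MeasurableSet V) {a b p : ℝ} (ha : 0 < a)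
    (hp : p ≤ 0) : IntegrableOn (fun z => ‖z‖ ^ p) (coneShell V a b) μ := by
  simpa using integrableOn_dist_rpow_of_le_dist (measurableSet_coneShell hVm a b)
    (measure_coneShell_lt_top μ a b).ne (x := 0) ha hp fun z hz => by simpa using hz.2.1.le

lemma one_sub_div_pow_mul_le_integral_coneShell (hV : ∀ c : ℝ, 0 < c → ∀ z ∈ V, c • z ∈ V)
    (hVm : MeasurableSet V) {a b : ℝ} (ha : 0 < a) (hab : a ≤ b) :
    (1 - (a / b) ^ finrank ℝ E) * μ.real (V ∩ closedBall 0 1)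
      ≤ ∫ z in coneShell V a b, ‖z‖ ^ (-(finrank ℝ E : ℝ)) ∂μ := by
  have hb : 0 < b := ha.trans_le hab
  calc (1 - (a / b) ^ finrank ℝ E) * μ.real (V ∩ closedBall 0 1)
      = b ^ (-(finrank ℝ E : ℝ)) * μ.real (coneShell V a b) := by
        rw [measureReal_coneShell μ hV hVm ha hab, rpow_neg hb.le, rpow_natCast, div_pow]
        field_simp
    _ ≤ _ := setIntegral_ge_of_const_le_real (measurableSet_coneShell hVm a b)
        (measure_coneShell_lt_top μ a b).ne
        (fun z hz => rpow_le_rpow_of_nonpos (ha.trans hz.2.1) hz.2.2 (by simp))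
        (integrableOn_norm_rpow_coneShell μ hVm ha (by simp))

lemma half_mul_log_div_le_integral_coneShell_of_le_two_mul [Nontrivial E]
    (hV : ∀ c : ℝ, 0 < c → ∀ z ∈ V, c • z ∈ V) (hVm : MeasurableSet V) {a b : ℝ} (ha : 0 < a)
    (hab : a ≤ b) (hb : b ≤ 2 * a) :
    μ.real (V ∩ closedBall 0 1) / 2 * log (b / a)
      ≤ ∫ z in coneShell V a b, ‖z‖ ^ (-(finrank ℝ E : ℝ)) ∂μ := calc
  _ ≤ (1 - (a / b) ^ finrank ℝ E) * μ.real (V ∩ closedBall 0 1) := by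
    nlinarith [log_div_le_two_mul_one_sub_div_pow ha hab hb (finrank_pos (R := ℝ) (M := E)).ne',
      measureReal_nonneg (μ := μ) (s := V ∩ closedBall 0 1)]
  _ ≤ _ := one_sub_div_pow_mul_le_integral_coneShell μ hV hVm ha hab

lemma half_mul_log_div_le_integral_coneShell [Nontrivial E]
    (hV : ∀ c : ℝ, 0 < c → ∀ z ∈ V, c • z ∈ V) (hVm : MeasurableSet V) {a b : ℝ} (ha : 0 < a)
    (hab : a ≤ b) :
    μ.real (V ∩ closedBall 0 1) / 2 * log (b / a)
      ≤ ∫ z in coneShell V a b, ‖z‖ ^ (-(finrank ℝ E : ℝ)) ∂μ := by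
  obtain ⟨n, hn⟩ := pow_unbounded_of_one_lt (b / a) one_lt_two
  induction n generalizing a with
  | zero =>
    refine half_mul_log_div_le_integral_coneShell_of_le_two_mul μ hV hVm ha hab ?_
    rw [pow_zero, div_lt_one ha] at hn
    linarith
  | succ n ih =>
    rcases le_or_gt b (2 * a) with hb | hb
    · exact half_mul_log_div_le_integral_coneShell_of_le_two_mul μ hV hVm ha hab hb
    have h2a : 0 < 2 * a := by positivity
    have hb0 : 0 < b := by linarith
    have hsplit : b / a = 2 * a / a * (b / (2 * a)) := by field_simp
    rw [← coneShell_union (by linarith) hb.le, setIntegral_union (disjoint_coneShell _ _ _)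
        (measurableSet_coneShell hVm _ _) (integrableOn_norm_rpow_coneShell μ hVm ha (by simp))
        (integrableOn_norm_rpow_coneShell μ hVm h2a (by simp)),
      hsplit, log_mul (by positivity) (by positivity), mul_add]
    refine add_le_add
      (half_mul_log_div_le_integral_coneShell_of_le_two_mul μ hV hVm ha (by linarith) le_rfl)
      (ih h2a hb.le ?_)
    rw [show b / (2 * a) = b / a / 2 by ring, div_lt_iff₀ two_pos, ← pow_succ]
    exact hn

end Cone

def apertureCone (N : ℕ) (α : ℝ) : Set (EuclideanSpace ℝ (Fin N)) :=
  {z | 0 < ‖z‖ ∧ ∀ i : Fin N, (i : ℕ) = N - 1 → z i < α * ‖z‖}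

section ApertureCone

variable {N : ℕ} {α : ℝ}

lemma smul_mem_apertureCone {c : ℝ} (hc : 0 < c) {z : EuclideanSpace ℝ (Fin N)}
    (hz : z ∈ apertureCone N α) : c • z ∈ apertureCone N α := by
  have hnorm : ‖c • z‖ = c * ‖z‖ := by rw [norm_smul, norm_of_nonneg hc.le]
  refine ⟨by rw [hnorm]; exact mul_pos hc hz.1, fun i hi => ?_⟩
  rw [hnorm, PiLp.smul_apply, smul_eq_mul, mul_left_comm]
  exact mul_lt_mul_of_pos_left (hz.2 i hi) hc

lemma isOpen_apertureCone : IsOpen (apertureCone N α) := by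
  simp only [apertureCone, ofPred_and, ofPred_forall]
  refine (isOpen_lt continuous_const continuous_norm).inter (isOpen_iInter_of_finite fun i => ?_)
  by_cases hi : (i : ℕ) = N - 1
  · simpa [hi] using isOpen_lt (EuclideanSpace.proj i).continuous (by fun_prop)
  · simp [hi]

lemma coneShell_apertureCone_subset_coneSegment (a b : ℝ) :
    coneShell (apertureCone N α) a b ⊆ coneSegment N α b :=
  fun _ hz => ⟨hz.1.1, hz.2.2, hz.1.2⟩

lemma measureReal_apertureCone_inter_closedBall_pos (hN : 0 < N) (hα : 0 < α) :
    0 < volume.real (apertureCone N α ∩ closedBall 0 1) := by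
  set i₀ : Fin N := ⟨N - 1, by omega⟩
  have hmem : EuclideanSpace.single i₀ (-(1 / 2) : ℝ) ∈ apertureCone N α ∩ ball 0 1 := by
    refine ⟨⟨by simp, fun i hi => ?_⟩, by simp; norm_num⟩
    obtain rfl : i = i₀ := Fin.ext hi
    simp
    linarith
  refine ENNReal.toReal_pos ((isOpen_apertureCone.inter isOpen_ball).measure_pos volume
      ⟨_, hmem⟩ |>.trans_le (measure_mono (inter_subset_inter_right _ ball_subset_closedBall))).ne'
    ((measure_mono inter_subset_right).trans_lt measure_closedBall_lt_top).ne

end ApertureCone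

lemma setIntegral_dist_image_add_linearIsometryEquiv {E : Type*} [NormedAddCommGroup E]
    [InnerProductSpace ℝ E] [FiniteDimensional ℝ E] [MeasurableSpace E] [BorelSpace E]
    (e : E ≃ₗᵢ[ℝ] E) (x : E) (f : ℝ → ℝ) (A : Set E) :
    ∫ y in (fun z => x + e z) '' A, f (dist x y) = ∫ z in A, f ‖z‖ := by
  have hemb : MeasurableEmbedding fun z => x + e z :=
    ((Homeomorph.addLeft x).toMeasurableEquiv.measurableEmbedding).comp
      e.toHomeomorph.toMeasurableEquiv.measurableEmbedding
  have hmp : MeasurePreserving (fun z => x + e z) volume volume :=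
    (measurePreserving_add_left volume x).comp e.measurePreserving
  rw [hmp.setIntegral_image_emb hemb]
  simp only [dist_self_add_right, LinearIsometryEquiv.norm_map]

theorem stmt_7_general {N : ℕ} (hN : 0 < N) (Ω : Set (EuclideanSpace ℝ (Fin N)))
    (hΩo : IsOpen Ω) (hΩbd : Bornology.IsBounded Ω)
    (δ₀ α : ℝ) (hδ₀1 : δ₀ < 1) (hα0 : 0 < α)
    (hcone : UniformConeProperty Ω α δ₀) :
    ∃ C₀ : ℝ, 0 < C₀ ∧ ∀ δ : ℝ, 0 < δ → δ < δ₀ → ∀ x ∈ closure Ω, ∀ s : ℝ, 0 ≤ s → s < 1 →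
      C₀ * Real.log (δ₀ / δ) ≤ ∫ y in Ω \ Metric.ball x δ, dist x y ^ (-(N : ℝ) - 2 * s) := by
  have : Nonempty (Fin N) := ⟨⟨0, hN⟩⟩
  refine ⟨volume.real (apertureCone N α ∩ closedBall 0 1) / 2,
    half_pos (measureReal_apertureCone_inter_closedBall_pos hN hα0), ?_⟩
  intro δ hδ hδδ₀ x hx s hs _
  obtain ⟨e, he⟩ := hcone x hx
  set A := coneShell (apertureCone N α) δ δ₀
  have hVm : MeasurableSet (apertureCone N α) := isOpen_apertureCone.measurableSet
  have hAm : MeasurableSet A := measurableSet_coneShell hVm _ _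
  have hsub : (fun z => x + e z) '' A ⊆ Ω \ ball x δ := by
    rintro _ ⟨z, hz, rfl⟩
    refine ⟨he ⟨z, coneShell_apertureCone_subset_coneSegment _ _ hz, rfl⟩, ?_⟩
    simpa [dist_comm x, dist_self_add_right] using hz.2.1.le
  calc _ ≤ ∫ z in A, ‖z‖ ^ (-(N : ℝ)) := by
        have h := half_mul_log_div_le_integral_coneShell volume
          (fun c hc z hz => smul_mem_apertureCone (α := α) hc hz) hVm hδ hδδ₀.le
        rwa [finrank_euclideanSpace_fin] at h
    _ ≤ ∫ z in A, ‖z‖ ^ (-(N : ℝ) - 2 * s) := by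
        have hp : -(N : ℝ) ≤ 0 := by simp
        refine setIntegral_mono_on (integrableOn_norm_rpow_coneShell volume hVm hδ hp)
          (integrableOn_norm_rpow_coneShell volume hVm hδ (by linarith)) hAm fun z hz => ?_
        exact rpow_le_rpow_of_exponent_ge (hδ.trans hz.2.1) (hz.2.2.trans hδ₀1.le) (by linarith)
    _ = ∫ y in (fun z => x + e z) '' A, dist x y ^ (-(N : ℝ) - 2 * s) :=
        (setIntegral_dist_image_add_linearIsometryEquiv e x (· ^ (-(N : ℝ) - 2 * s)) A).symm
    _ ≤ _ := setIntegral_mono_set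
        (integrableOn_dist_rpow_of_le_dist (hΩo.measurableSet.diff measurableSet_ball)
          (measure_mono sdiff_subset |>.trans_lt hΩbd.measure_lt_top).ne hδ (by linarith)
          fun y hy => by simpa [dist_comm] using hy.2)
        (ae_of_all _ fun _ => rpow_nonneg dist_nonneg _) hsub.eventuallyLE

/-- If a bounded open set `Ω ⊆ ℝ^N` has the uniform cone property with parameters
`δ₀ ∈ (0,1)` and `α ∈ (0,π/2]`, then there is `C₀ > 0` (depending only on `N` and `α`)
with `∫_{Ω \ B_δ(x)} |x-y|^(-N-2s) dy ≥ C₀ log (δ₀/δ)` for all `δ ∈ (0,δ₀)`,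
`x ∈ cl Ω` and `s ∈ [0,1)`. -/
theorem stmt_7 {N : ℕ} (hN : 0 < N) (Ω : Set (EuclideanSpace ℝ (Fin N)))
    (hΩo : IsOpen Ω) (hΩbd : Bornology.IsBounded Ω)
    (δ₀ α : ℝ) (hδ₀0 : 0 < δ₀) (hδ₀1 : δ₀ < 1) (hα0 : 0 < α) (hα1 : α ≤ Real.pi / 2)
    (hcone : UniformConeProperty Ω α δ₀) :
    ∃ C₀ : ℝ, 0 < C₀ ∧ ∀ δ : ℝ, 0 < δ → δ < δ₀ → ∀ x ∈ closure Ω, ∀ s : ℝ, 0 ≤ s → s < 1 →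
      C₀ * Real.log (δ₀ / δ) ≤ ∫ y in Ω \ Metric.ball x δ, dist x y ^ (-(N : ℝ) - 2 * s) :=
  stmt_7_general hN Ω hΩo hΩbd δ₀ α hδ₀1 hα0 hcone
end
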